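/- Let G be a finite simple graph with n vertices and m edges. Then the largest eigenvalue of its adjacency matrix satisfies λ_PF(G) ≤ (1/2)(√(8m + 1) − 1). -/

import Mathlib

/-!
If `μ` is an eigenvalue of the adjacency matrix `A`, then `μ² + μ` is an eigenvalue of
`A² + A`. The row of `A² + A` at a vertex `k` has nonnegative entries summing to the degree
sum over the closed neighbourhood of `k`, which is at most `2m`. Since an eigenvalue is bounded
in absolute value by some row sum (Gershgorin), `μ² + μ ≤ 2m`, and solving this quadratic
inequality gives `μ ≤ (√(8m + 1) - 1) / 2`.
-/

open Classical in
/-- `lamPF G` is the largest eigenvalue (Perron–Frobenius eigenvalue) of the real adjacency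
matrix of the finite simple graph `G`. -/
noncomputable def lamPF {V : Type*} [Fintype V] (G : SimpleGraph V) : ℝ :=
  sSup (spectrum ℝ (G.adjMatrix ℝ))

open Finset Matrix Polynomial

theorem Matrix.exists_norm_le_sum_norm_of_mem_spectrum {K n : Type*} [NormedField K] [Fintype n]
    [DecidableEq n] {A : Matrix n n K} {μ : K} (hμ : μ ∈ spectrum K A) :
    ∃ k, ‖μ‖ ≤ ∑ j, ‖A k j‖ := by
  rw [← spectrum_toLin'] at hμ
  obtain ⟨k, hk⟩ := eigenvalue_mem_ball (Module.End.HasEigenvalue.of_mem_spectrum hμ)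
  refine ⟨k, ?_⟩
  rw [mem_closedBall_iff_norm] at hk
  calc ‖μ‖ ≤ ‖A k k‖ + ‖μ - A k k‖ := norm_le_insert' μ (A k k)
    _ ≤ ‖A k k‖ + ∑ j ∈ univ.erase k, ‖A k j‖ := by gcongr
    _ = ∑ j, ‖A k j‖ := add_sum_erase _ (fun j ↦ ‖A k j‖) (mem_univ k)

namespace SimpleGraph

variable {V : Type*} [Fintype V] (G : SimpleGraph V) [DecidableRel G.Adj]

theorem sum_adjMatrix_apply {α : Type*} [NonAssocSemiring α] (i : V) :
    ∑ j, G.adjMatrix α i j = G.degree i := by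
  simpa [mulVec, dotProduct] using G.adjMatrix_mulVec_apply (α := α) i 1

theorem sum_adjMatrix_sq_add_adjMatrix_apply {α : Type*} [Semiring α] [DecidableEq V] (k : V) :
    ∑ j, (G.adjMatrix α ^ 2 + G.adjMatrix α) k j =
      ∑ u ∈ insert k (G.neighborFinset k), (G.degree u : α) := by
  simp only [sq, Matrix.add_apply, sum_add_distrib, adjMatrix_mul_apply,
    sum_comm (γ := V) (s := univ), sum_adjMatrix_apply,
    sum_insert (G.notMem_neighborFinset_self k), add_comm]

theorem adjMatrix_sq_add_adjMatrix_apply_nonneg {α : Type*} [Semiring α] [PartialOrder α]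
    [IsOrderedRing α] [DecidableEq V] (i j : V) :
    0 ≤ (G.adjMatrix α ^ 2 + G.adjMatrix α) i j := by
  have hA : ∀ u w, 0 ≤ G.adjMatrix α u w := fun u w ↦ by
    rw [adjMatrix_apply]; split_ifs <;> simp
  rw [sq, Matrix.add_apply, adjMatrix_mul_apply]
  exact add_nonneg (sum_nonneg fun u _ ↦ hA u j) (hA i j)

theorem sum_degree_insert_neighborFinset_le [DecidableEq V] (k : V) :
    ∑ u ∈ insert k (G.neighborFinset k), G.degree u ≤ 2 * #G.edgeFinset := by
  rw [← sum_degrees_eq_twice_card_edges]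
  exact sum_le_sum_of_subset (subset_univ _)

theorem sq_add_self_le_of_mem_spectrum_adjMatrix [DecidableEq V] {μ : ℝ}
    (hμ : μ ∈ spectrum ℝ (G.adjMatrix ℝ)) :
    μ ^ 2 + μ ≤ 2 * #G.edgeFinset := by
  have hsq : μ ^ 2 + μ ∈ spectrum ℝ (G.adjMatrix ℝ ^ 2 + G.adjMatrix ℝ) := by
    have h := spectrum.subset_polynomial_aeval (G.adjMatrix ℝ) (X ^ 2 + X)
      (Set.mem_image_of_mem _ hμ)
    simpa only [eval_add, eval_pow, eval_X, map_add, map_pow, aeval_X] using h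
  obtain ⟨k, hk⟩ := exists_norm_le_sum_norm_of_mem_spectrum hsq
  simp only [Real.norm_of_nonneg (G.adjMatrix_sq_add_adjMatrix_apply_nonneg _ _),
    G.sum_adjMatrix_sq_add_adjMatrix_apply] at hk
  calc μ ^ 2 + μ ≤ ‖μ ^ 2 + μ‖ := Real.le_norm_self _
    _ ≤ ∑ u ∈ insert k (G.neighborFinset k), (G.degree u : ℝ) := hk
    _ ≤ 2 * #G.edgeFinset := by exact_mod_cast G.sum_degree_insert_neighborFinset_le k

end SimpleGraph

theorem Real.le_sqrt_sub_one_div_two_of_sq_add_self_le {x m : ℝ} (h : x ^ 2 + x ≤ 2 * m) :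
    x ≤ (√(8 * m + 1) - 1) / 2 := by
  have : |2 * x + 1| ≤ √(8 * m + 1) := Real.abs_le_sqrt (by nlinarith)
  linarith [le_abs_self (2 * x + 1)]

/-- For a finite simple graph `G` with `m` edges,
`λ_PF(G) ≤ (√(8 m + 1) - 1) / 2`. -/
theorem lamPF_le_of_edges {V : Type*} [Fintype V] (G : SimpleGraph V) :
    lamPF G ≤ (Real.sqrt (8 * (Nat.card G.edgeSet : ℝ) + 1) - 1) / 2 := by
  classical
  refine Real.sSup_le (fun μ hμ ↦ ?_) ?_
  · apply Real.le_sqrt_sub_one_div_two_of_sq_add_self_le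
    rw [Nat.card_eq_fintype_card, ← G.edgeFinset_card]
    exact G.sq_add_self_le_of_mem_spectrum_adjMatrix hμ
  · have : 1 ≤ √(8 * (Nat.card G.edgeSet : ℝ) + 1) :=
      Real.one_le_sqrt.mpr (le_add_of_nonneg_left (by positivity))
    linarith
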